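/- Let V be exponentially distributed with rate θ > 0 and ψ(x) = x - ∫ (1 - e^{-rx}) b P_V(dr) the associated Laplace exponent. If V_θ = min(V, E_θ) where E_θ is an independent exponential random variable of parameter θ, then the Laplace exponent ψ_θ associated with the law of V_θ satisfies ψ_θ(x) = x ψ(x + θ)/(x + θ) for all x > 0. -/

import Mathlib

open MeasureTheory Real ProbabilityTheory
open scoped ENNReal

/-- The term `e^{-r x}` for `r ∈ (0,∞]`, with the convention `e^{-∞·x} = 0`. -/
noncomputable def expTermE (r : ℝ≥0∞) (x : ℝ) : ℝ :=
  if r = ⊤ then 0 else Real.exp (-(r.toReal * x))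

/-- The Laplace exponent `ψ_ν(x) = x - ∫ (1 - e^{-rx}) b ν(dr)` associated with a lifetime
law `ν` on `(0,∞]` and birth rate `b`. -/
noncomputable def laplaceExponent (ν : Measure ℝ≥0∞) (b x : ℝ) : ℝ :=
  x - ∫ r, (1 - expTermE r x) * b ∂ν

open Set

lemma auxderiv (x s : ℝ) : HasDerivAt (fun s => -Real.exp (-(x*s))) (x * Real.exp (-(x*s))) s := by
  have h1 : HasDerivAt (fun s : ℝ => -(x*s)) (-x) s := by
    simpa using ((hasDerivAt_id s).const_mul x).fun_neg
  have := (h1.exp).fun_neg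
  exact this.congr_deriv (by ring)

lemma auxint {x : ℝ} (hx : 0 < x) : IntegrableOn (fun s => x * Real.exp (-(x*s))) (Ioi (0:ℝ)) := by
  have := (exp_neg_integrableOn_Ioi 0 hx).const_mul x
  simpa [neg_mul, IntegrableOn] using this

lemma aux1 {x : ℝ} (hx : 0 < x) : ∫ s in Ioi (0:ℝ), x * Real.exp (-(x*s)) = 1 := by
  have htend : Filter.Tendsto (fun s => -Real.exp (-(x*s))) Filter.atTop (nhds 0) := by
    rw [show (0:ℝ) = -0 by ring]
    refine Filter.Tendsto.neg ?_
    refine Real.tendsto_exp_atBot.comp ?_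
    have : Filter.Tendsto (fun s : ℝ => (-x) * s) Filter.atTop Filter.atBot :=
      Filter.tendsto_id.const_mul_atTop_of_neg (by linarith)
    exact this.congr (fun s => by ring)
  have := MeasureTheory.integral_Ioi_of_hasDerivAt_of_tendsto'
    (fun s _ => auxderiv x s) (auxint hx) htend
  simpa using this

lemma aux2 {x v : ℝ} (hv : 0 ≤ v) :
    ∫ s in Ioo (0:ℝ) v, x * Real.exp (-(x*s)) = 1 - Real.exp (-(x*v)) := by
  rw [← integral_Ioc_eq_integral_Ioo, ← intervalIntegral.integral_of_le hv]
  rw [intervalIntegral.integral_eq_sub_of_hasDerivAt (fun s _ => auxderiv x s)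
    ((Continuous.intervalIntegrable (by continuity) 0 v))]
  simp
  ring

lemma aux3 {x : ℝ} (hx : 0 < x) (m : ℝ≥0∞) :
    ENNReal.ofReal (1 - expTermE m x)
      = ∫⁻ s in Ioi (0:ℝ), ({s : ℝ | ENNReal.ofReal s < m}.indicator
          (fun s => ENNReal.ofReal (x * Real.exp (-(x*s))))) s := by
  have hSm : MeasurableSet {s : ℝ | ENNReal.ofReal s < m} :=
    ENNReal.measurable_ofReal (measurableSet_Iio (a := m))
  rw [lintegral_indicator hSm, Measure.restrict_restrict hSm]
  by_cases hm : m = ⊤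
  · have hset : {s : ℝ | ENNReal.ofReal s < m} ∩ Ioi 0 = Ioi 0 := by
      ext s; simp [hm, ENNReal.ofReal_lt_top]
    rw [hset, ← ofReal_integral_eq_lintegral_ofReal (auxint hx)
      (Filter.Eventually.of_forall fun s => by positivity), aux1 hx]
    simp [expTermE, hm]
  · have hv : 0 ≤ m.toReal := ENNReal.toReal_nonneg
    have hset : {s : ℝ | ENNReal.ofReal s < m} ∩ Ioi 0 = Ioo 0 m.toReal := by
      ext s
      simp only [mem_inter_iff, mem_setOf_eq, mem_Ioi, mem_Ioo]
      constructor
      · rintro ⟨h1, h2⟩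
        exact ⟨h2, (ENNReal.ofReal_lt_iff_lt_toReal h2.le hm).1 h1⟩
      · rintro ⟨h2, h1⟩
        exact ⟨(ENNReal.ofReal_lt_iff_lt_toReal h2.le hm).2 h1, h2⟩
    rw [hset, ← ofReal_integral_eq_lintegral_ofReal
      ((auxint hx).mono_set Ioo_subset_Ioi_self)
      (Filter.Eventually.of_forall fun s => by positivity), aux2 hv]
    simp [expTermE, hm, mul_comm]

lemma aux4 {Ω : Type*} [MeasureSpace Ω] [IsProbabilityMeasure (ℙ : Measure Ω)]
    {W : Ω → ℝ≥0∞} (hW : Measurable W) {x : ℝ} (hx : 0 < x) :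
    ∫⁻ ω, ENNReal.ofReal (1 - expTermE (W ω) x) ∂(ℙ : Measure Ω)
      = ∫⁻ s in Ioi (0:ℝ), ENNReal.ofReal (x * Real.exp (-(x*s)))
          * (ℙ : Measure Ω) {ω | ENNReal.ofReal s < W ω} := by
  have h1 : ∫⁻ ω, ENNReal.ofReal (1 - expTermE (W ω) x) ∂(ℙ : Measure Ω)
      = ∫⁻ ω, (∫⁻ s in Ioi (0:ℝ), ({s : ℝ | ENNReal.ofReal s < W ω}.indicator
          (fun s => ENNReal.ofReal (x * Real.exp (-(x*s))))) s) ∂(ℙ : Measure Ω) := by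
    simp_rw [aux3 hx]
  rw [h1]
  rw [lintegral_lintegral_swap]
  · refine setLIntegral_congr_fun measurableSet_Ioi (fun s hs => ?_)
    have heq : (fun ω => ({s : ℝ | ENNReal.ofReal s < W ω}.indicator
          (fun s => ENNReal.ofReal (x * Real.exp (-(x*s))))) s)
        = (fun ω => ({ω : Ω | ENNReal.ofReal s < W ω}.indicator
          (fun _ => ENNReal.ofReal (x * Real.exp (-(x*s))))) ω) := by
      funext ω
      simp only [Set.indicator_apply, Set.mem_setOf_eq]
    rw [heq, lintegral_indicator_const]
    exact hW measurableSet_Ioi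
  · have hset : MeasurableSet {p : Ω × ℝ | ENNReal.ofReal p.2 < W p.1} :=
      measurableSet_lt (ENNReal.measurable_ofReal.comp measurable_snd) (hW.comp measurable_fst)
    have : Measurable (Function.uncurry fun ω s =>
        ({s : ℝ | ENNReal.ofReal s < W ω}.indicator
          (fun s => ENNReal.ofReal (x * Real.exp (-(x*s))))) s) := by
      have := Measurable.indicator
        (f := fun p : Ω × ℝ => ENNReal.ofReal (x * Real.exp (-(x*p.2))))
        (((measurable_snd.const_mul x).neg.exp.const_mul x).ennreal_ofReal) hset
      convert this using 1
      funext p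
      simp only [Function.uncurry, Set.indicator_apply, Set.mem_setOf_eq]
    exact this.aemeasurable

lemma expTermE_mem {m : ℝ≥0∞} {y : ℝ} (hy : 0 ≤ y) :
    0 ≤ expTermE m y ∧ expTermE m y ≤ 1 := by
  unfold expTermE
  split
  · norm_num
  · refine ⟨(Real.exp_pos _).le, ?_⟩
    rw [show (1:ℝ) = Real.exp 0 by simp]
    apply Real.exp_le_exp.mpr
    have : 0 ≤ m.toReal * y := mul_nonneg ENNReal.toReal_nonneg hy
    linarith

lemma expTermE_measurable (y : ℝ) : Measurable fun r : ℝ≥0∞ => expTermE r y := by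
  unfold expTermE
  refine Measurable.ite ?_ measurable_const ?_
  · exact measurableSet_eq
  · exact ((ENNReal.measurable_toReal.mul_const y).neg).exp

/-- Bochner integral in terms of lintegral. -/
lemma aux6 {Ω : Type*} [MeasureSpace Ω] [IsProbabilityMeasure (ℙ : Measure Ω)]
    {W : Ω → ℝ≥0∞} (hW : Measurable W) (b : ℝ) {y : ℝ} (hy : 0 < y) :
    ∫ r, (1 - expTermE r y) * b ∂(Measure.map W (ℙ : Measure Ω))
      = b * (∫⁻ ω, ENNReal.ofReal (1 - expTermE (W ω) y) ∂(ℙ : Measure Ω)).toReal := by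
  have hg : Measurable fun r : ℝ≥0∞ => (1 - expTermE r y) * b :=
    ((measurable_const.sub (expTermE_measurable y)).mul_const b)
  rw [integral_map hW.aemeasurable hg.aestronglyMeasurable]
  have h2 : ∫ ω, (1 - expTermE (W ω) y) * b ∂(ℙ : Measure Ω)
      = (∫ ω, (1 - expTermE (W ω) y) ∂(ℙ : Measure Ω)) * b := by
    rw [integral_mul_const]
  have hm : Measurable (fun ω => 1 - expTermE (W ω) y) :=
    ((expTermE_measurable y).comp hW).const_sub 1
  rw [h2, integral_eq_lintegral_of_nonneg_ae
    (Filter.Eventually.of_forall fun ω => by simp only [Pi.zero_apply]; linarith [(expTermE_mem (m := W ω) hy.le).2])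
    hm.aestronglyMeasurable]
  ring

lemma aux7 {Ω : Type*} [MeasureSpace Ω] [IsProbabilityMeasure (ℙ : Measure Ω)]
    (W : Ω → ℝ≥0∞) {y : ℝ} (hy : 0 < y) :
    ∫⁻ ω, ENNReal.ofReal (1 - expTermE (W ω) y) ∂(ℙ : Measure Ω) ≤ 1 := by
  calc ∫⁻ ω, ENNReal.ofReal (1 - expTermE (W ω) y) ∂(ℙ : Measure Ω)
      ≤ ∫⁻ _, 1 ∂(ℙ : Measure Ω) := by
        refine lintegral_mono fun ω => ?_
        refine ENNReal.ofReal_le_one.mpr ?_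
        linarith [(expTermE_mem (m := W ω) hy.le).1]
    _ = 1 := by simp

/-- If `V_θ = min(V, E_θ)` with `E_θ` exponential of parameter `θ` independent of `V`, then
the Laplace exponent of the law of `V_θ` satisfies `ψ_θ(x) = x ψ(x+θ)/(x+θ)` for `x > 0`. -/
theorem stmt2 {Ω : Type*} [MeasureSpace Ω] [IsProbabilityMeasure (ℙ : Measure Ω)]
    (b θ : ℝ) (hb : 0 < b) (hθ : 0 < θ)
    (V T : Ω → ℝ≥0∞) (hV : Measurable V) (hT : Measurable T)
    (hTexp : ∀ r : ℝ, 0 ≤ r →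
      ℙ {ω | ENNReal.ofReal r < T ω} = ENNReal.ofReal (Real.exp (-(θ * r))))
    (hindep : IndepFun V T ℙ) :
    ∀ x : ℝ, 0 < x →
      laplaceExponent (Measure.map (fun ω => min (V ω) (T ω)) ℙ) b x
        = x * laplaceExponent (Measure.map V ℙ) b (x + θ) / (x + θ) := by
  intro x hx
  have hxθ : 0 < x + θ := by linarith
  have hmin : Measurable fun ω => min (V ω) (T ω) := hV.min hT
  -- probability of the min tail via independence
  have hprob : ∀ s : ℝ, 0 < s →
      ℙ {ω | ENNReal.ofReal s < min (V ω) (T ω)}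
        = ℙ {ω | ENNReal.ofReal s < V ω} * ENNReal.ofReal (Real.exp (-(θ * s))) := by
    intro s hs
    have hsets : {ω | ENNReal.ofReal s < min (V ω) (T ω)}
        = V ⁻¹' (Ioi (ENNReal.ofReal s)) ∩ T ⁻¹' (Ioi (ENNReal.ofReal s)) := by
      ext ω
      simp [lt_min_iff, Set.mem_setOf_eq, and_comm]
    rw [hsets, hindep.measure_inter_preimage_eq_mul _ _ measurableSet_Ioi measurableSet_Ioi,
      ← hTexp s hs.le]
    rfl
  -- main lintegral computation
  have hmain : ∫⁻ ω, ENNReal.ofReal (1 - expTermE (min (V ω) (T ω)) x) ∂(ℙ : Measure Ω)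
      = ENNReal.ofReal (x / (x + θ))
        * ∫⁻ ω, ENNReal.ofReal (1 - expTermE (V ω) (x + θ)) ∂(ℙ : Measure Ω) := by
    rw [aux4 hmin hx, aux4 hV hxθ]
    rw [← lintegral_const_mul' _ _ ENNReal.ofReal_ne_top]
    refine setLIntegral_congr_fun measurableSet_Ioi (fun s hs => ?_)
    rw [hprob s hs]
    have hre : (x * Real.exp (-(x*s))) * Real.exp (-(θ*s))
        = (x/(x+θ)) * ((x+θ) * Real.exp (-((x+θ)*s))) := by
      rw [mul_assoc, ← Real.exp_add, show -(x*s) + -(θ*s) = -((x+θ)*s) by ring]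
      field_simp
    calc ENNReal.ofReal (x * Real.exp (-(x*s)))
          * (ℙ {ω | ENNReal.ofReal s < V ω} * ENNReal.ofReal (Real.exp (-(θ*s))))
        = (ENNReal.ofReal (x * Real.exp (-(x*s))) * ENNReal.ofReal (Real.exp (-(θ*s))))
            * ℙ {ω | ENNReal.ofReal s < V ω} := by ring
      _ = ENNReal.ofReal ((x * Real.exp (-(x*s))) * Real.exp (-(θ*s)))
            * ℙ {ω | ENNReal.ofReal s < V ω} := by
          rw [← ENNReal.ofReal_mul (by positivity)]
      _ = ENNReal.ofReal ((x/(x+θ)) * ((x+θ) * Real.exp (-((x+θ)*s))))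
            * ℙ {ω | ENNReal.ofReal s < V ω} := by rw [hre]
      _ = ENNReal.ofReal (x/(x+θ)) * (ENNReal.ofReal ((x+θ) * Real.exp (-((x+θ)*s)))
            * ℙ {ω | ENNReal.ofReal s < V ω}) := by
          rw [ENNReal.ofReal_mul (by positivity)]; ring
  -- assemble
  unfold laplaceExponent
  rw [aux6 hmin b hx, aux6 hV b hxθ, hmain]
  have hAV := aux7 (Ω := Ω) V hxθ
  have hAVne : (∫⁻ ω, ENNReal.ofReal (1 - expTermE (V ω) (x + θ)) ∂(ℙ : Measure Ω)) ≠ ⊤ :=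
    (lt_of_le_of_lt hAV ENNReal.one_lt_top).ne
  rw [ENNReal.toReal_mul, ENNReal.toReal_ofReal (by positivity)]
  set A := (∫⁻ ω, ENNReal.ofReal (1 - expTermE (V ω) (x + θ)) ∂(ℙ : Measure Ω)).toReal
  field_simp
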